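/- arXiv:2304.05235 — 3 statements merged into one kernel-verified Lean document; each statement's English description precedes it below -/
import Mathlib

section
/- Let T be a near-truss and z ∈ T. For a ∈ T, the map σ̌_a^z : T → T, b ↦ [ab, az, z], is injective if and only if a is left cancellative. Moreover, if T is unital and a is invertible, then σ̌_a^z is bijective, with inverse c ↦ [a⁻¹c, a⁻¹z, z]. -/
/-- A near-truss: a heap with an associative multiplication that left-distributes over
the ternary heap operation. -/
structure NearTruss (T : Type*) where
  tern : T → T → T → T
  mul : T → T → T
  tern_assoc : ∀ a b c d e, tern a b (tern c d e) = tern (tern a b c) d e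
  tern_idl : ∀ a b, tern a a b = b
  tern_idr : ∀ a b, tern b a a = b
  mul_assoc : ∀ a b c, mul (mul a b) c = mul a (mul b c)
  ldist : ∀ a b c d, mul a (tern b c d) = tern (mul a b) (mul a c) (mul a d)

/-- `σ̌_a^z` is injective iff `a` is left cancellative; moreover if `T` is unital and `a`
is invertible then `σ̌_a^z` is bijective, with inverse `c ↦ [a⁻¹c, a⁻¹z, z]`. -/
theorem statement16 {α : Type*} (T : NearTruss α) (z a : α) :
    (Function.Injective (fun b => T.tern (T.mul a b) (T.mul a z) z) ↔
      ∀ b c : α, T.mul a b = T.mul a c → b = c) ∧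
    (∀ one : α, (∀ t, T.mul one t = t) → (∀ t, T.mul t one = t) →
      ∀ ainv : α, T.mul a ainv = one → T.mul ainv a = one →
        Function.Bijective (fun b => T.tern (T.mul a b) (T.mul a z) z) ∧
        Function.LeftInverse (fun c => T.tern (T.mul ainv c) (T.mul ainv z) z)
          (fun b => T.tern (T.mul a b) (T.mul a z) z) ∧
        Function.RightInverse (fun c => T.tern (T.mul ainv c) (T.mul ainv z) z)
          (fun b => T.tern (T.mul a b) (T.mul a z) z)) := by

  -- heap cancellation: [x,y,w]=[x',y,w] → x = x'
  have canc : ∀ x x' y w : α, T.tern x y w = T.tern x' y w → x = x' := by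
    intro x x' y w h
    have h1 : T.tern (T.tern x y w) w y = x := by
      rw [← T.tern_assoc, T.tern_idl, T.tern_idr]
    have h2 : T.tern (T.tern x' y w) w y = x' := by
      rw [← T.tern_assoc, T.tern_idl, T.tern_idr]
    rw [← h1, h, h2]
  constructor
  · constructor
    · intro hinj b c hbc
      apply hinj
      simp only [hbc]
    · intro hc b c h
      exact hc b c (canc _ _ _ _ h)
  · intro one hone1 hone2 ainv hinv1 hinv2
    have key : ∀ x y : α, T.mul x y = one → ∀ b,
        T.tern (T.mul x (T.tern (T.mul y b) (T.mul y z) z)) (T.mul x z) z = b := by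
      intro x y hxy b
      rw [T.ldist, ← T.mul_assoc, ← T.mul_assoc, hxy, hone1, hone1,
        ← T.tern_assoc, T.tern_idl, T.tern_idr]
    have li : Function.LeftInverse (fun c => T.tern (T.mul ainv c) (T.mul ainv z) z)
        (fun b => T.tern (T.mul a b) (T.mul a z) z) := fun b => key ainv a hinv2 b
    have ri : Function.RightInverse (fun c => T.tern (T.mul ainv c) (T.mul ainv z) z)
        (fun b => T.tern (T.mul a b) (T.mul a z) z) := fun b => key a ainv hinv1 b
    exact ⟨⟨li.injective, ri.surjective⟩, li, ri⟩
end

section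
/- Let T be a unital near-truss, B a skew brace with near-truss structure T(B) given by [a,b,c] = a - b + c and multiplication ∘, and suppose there are unital near-truss homomorphisms π : T → T(B), γ : T(B) → T with π∘γ = id_B. Let z ∈ T with π(z) ∈ D_r(B). Define η̌_a^z(b) = [γπ(a)γπ(b), γπ(a)γπ(z), γπ(z)] and η̌_a^z(b)⁻¹ = γ((π(η̌_a^z(b)))⁻¹). Then the map ř^z : T × T → T × T, (a,b) ↦ (η̌_a^z(b), η̌_a^z(b)⁻¹ · a · b), is a set-theoretic solution of the Yang-Baxter equation on T. -/
/-- The braid/Yang-Baxter condition for a map `r : X × X → X × X`. -/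
def IsYBE {X : Type*} (r : X × X → X × X) : Prop :=
  (fun p : X × X × X => ((r (p.1, p.2.1)).1, (r (p.1, p.2.1)).2, p.2.2)) ∘
      (fun p : X × X × X => (p.1, r (p.2.1, p.2.2))) ∘
      (fun p : X × X × X => ((r (p.1, p.2.1)).1, (r (p.1, p.2.1)).2, p.2.2)) =
    (fun p : X × X × X => (p.1, r (p.2.1, p.2.2))) ∘
      (fun p : X × X × X => ((r (p.1, p.2.1)).1, (r (p.1, p.2.1)).2, p.2.2)) ∘
      (fun p : X × X × X => (p.1, r (p.2.1, p.2.2)))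

/-- A skew (left) brace: two group structures with common identity `zero`, with
`a ∘ (b + c) = a ∘ b - a + a ∘ c`. -/
structure SkewBrace (B : Type*) where
  add : B → B → B
  zero : B
  neg : B → B
  mul : B → B → B
  inv : B → B
  add_assoc : ∀ a b c, add (add a b) c = add a (add b c)
  zero_add : ∀ a, add zero a = a
  add_zero : ∀ a, add a zero = a
  neg_add : ∀ a, add (neg a) a = zero
  add_neg : ∀ a, add a (neg a) = zero
  mul_assoc : ∀ a b c, mul (mul a b) c = mul a (mul b c)
  zero_mul : ∀ a, mul zero a = a
  mul_zero : ∀ a, mul a zero = a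
  inv_mul : ∀ a, mul (inv a) a = zero
  mul_inv : ∀ a, mul a (inv a) = zero
  dist : ∀ a b c, mul a (add b c) = add (add (mul a b) (neg a)) (mul a c)

/-- The right distributor `D_r(B)`. -/
def SkewBrace.Dr {B : Type*} (Br : SkewBrace B) : Set B :=
  {z | ∀ a b, Br.mul (Br.add a b) z = Br.add (Br.add (Br.mul a z) (Br.neg z)) (Br.mul b z)}

/-- `σ_a^z(b) = -a∘z + a∘b∘z`. -/
def SkewBrace.sigma {B : Type*} (Br : SkewBrace B) (z a b : B) : B :=
  Br.add (Br.neg (Br.mul a z)) (Br.mul (Br.mul a b) z)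

/-- `τ_b^z(a) = (σ_a^z(b))⁻ ∘ a ∘ b`. -/
def SkewBrace.tau {B : Type*} (Br : SkewBrace B) (z b a : B) : B :=
  Br.mul (Br.mul (Br.inv (Br.sigma z a b)) a) b

/-- The deformed map `r_z`. -/
def SkewBrace.rz {B : Type*} (Br : SkewBrace B) (z : B) : B × B → B × B :=
  fun p => (Br.sigma z p.1 p.2, Br.tau z p.2 p.1)

/-- The map `ř_w(a,b) = (a∘b - a∘w + w, (a∘b - a∘w + w)⁻ ∘ a ∘ b)`. -/
def SkewBrace.rcheck {B : Type*} (Br : SkewBrace B) (w : B) : B × B → B × B :=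
  fun p =>
    (Br.add (Br.add (Br.mul p.1 p.2) (Br.neg (Br.mul p.1 w))) w,
     Br.mul (Br.mul (Br.inv (Br.add (Br.add (Br.mul p.1 p.2) (Br.neg (Br.mul p.1 w))) w)) p.1) p.2)

/-- A unital near-truss: a near-truss whose multiplication has an identity. -/
structure UnitalNearTruss (T : Type*) extends NearTruss T where
  one : T
  one_mul : ∀ a, mul one a = a
  mul_one : ∀ a, mul a one = a

namespace st17

variable {β : Type*} (Br : SkewBrace β)

theorem add_neg_cancel_left (a b : β) : Br.add a (Br.add (Br.neg a) b) = b := by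
  rw [← Br.add_assoc, Br.add_neg, Br.zero_add]

theorem neg_add_cancel_left (a b : β) : Br.add (Br.neg a) (Br.add a b) = b := by
  rw [← Br.add_assoc, Br.neg_add, Br.zero_add]

theorem neg_unique {a b : β} (h : Br.add a b = Br.zero) : Br.neg a = b := by
  have h2 := congrArg (Br.add (Br.neg a)) h
  rw [← Br.add_assoc, Br.neg_add, Br.zero_add, Br.add_zero] at h2
  exact h2.symm

theorem neg_neg (a : β) : Br.neg (Br.neg a) = a := neg_unique Br (Br.neg_add a)

theorem neg_zero : Br.neg Br.zero = Br.zero := neg_unique Br (Br.zero_add _)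

theorem neg_add_rev (a b : β) : Br.neg (Br.add a b) = Br.add (Br.neg b) (Br.neg a) :=
  neg_unique Br (by rw [Br.add_assoc, add_neg_cancel_left, Br.add_neg])

theorem add_left_cancel {a b c : β} (h : Br.add a b = Br.add a c) : b = c := by
  have h2 := congrArg (Br.add (Br.neg a)) h
  rwa [neg_add_cancel_left, neg_add_cancel_left] at h2

theorem mul_inv_cancel_left (a b : β) : Br.mul a (Br.mul (Br.inv a) b) = b := by
  rw [← Br.mul_assoc, Br.mul_inv, Br.zero_mul]

theorem inv_mul_cancel_left (a b : β) : Br.mul (Br.inv a) (Br.mul a b) = b := by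
  rw [← Br.mul_assoc, Br.inv_mul, Br.zero_mul]

theorem inv_unique {a b : β} (h : Br.mul a b = Br.zero) : Br.inv a = b := by
  have h2 := congrArg (Br.mul (Br.inv a)) h
  rw [← Br.mul_assoc, Br.inv_mul, Br.zero_mul, Br.mul_zero] at h2
  exact h2.symm

theorem inv_inv (a : β) : Br.inv (Br.inv a) = a := inv_unique Br (Br.inv_mul a)

theorem inv_mul_rev (a b : β) : Br.inv (Br.mul a b) = Br.mul (Br.inv b) (Br.inv a) :=
  inv_unique Br (by rw [Br.mul_assoc, mul_inv_cancel_left, Br.mul_inv])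

theorem mul_neg (a b : β) :
    Br.mul a (Br.neg b) = Br.add a (Br.add (Br.neg (Br.mul a b)) a) := by
  have h := Br.dist a b (Br.neg b)
  rw [Br.add_neg, Br.mul_zero] at h
  have h2 := congrArg (Br.add (Br.add a (Br.neg (Br.mul a b)))) h
  simp only [Br.add_assoc, neg_add_cancel_left, add_neg_cancel_left] at h2
  exact h2.symm

theorem dist3 (a m1 m2 m3 : β) :
    Br.mul a (Br.add (Br.add m1 (Br.neg m2)) m3) =
      Br.add (Br.add (Br.mul a m1) (Br.neg (Br.mul a m2))) (Br.mul a m3) := by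
  rw [Br.dist, Br.dist, mul_neg]
  simp only [Br.add_assoc, neg_add_cancel_left, add_neg_cancel_left]

variable (w : β)

theorem neg_mul_w (hw : ∀ a b : β, Br.mul (Br.add a b) w
      = Br.add (Br.add (Br.mul a w) (Br.neg w)) (Br.mul b w)) (a : β) :
    Br.mul (Br.neg a) w = Br.add w (Br.add (Br.neg (Br.mul a w)) w) := by
  have h := hw a (Br.neg a)
  rw [Br.add_neg, Br.zero_mul] at h
  have h2 := congrArg (Br.add (Br.add w (Br.neg (Br.mul a w)))) h
  simp only [Br.add_assoc, neg_add_cancel_left, add_neg_cancel_left] at h2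
  exact h2.symm

theorem distw (hw : ∀ a b : β, Br.mul (Br.add a b) w
      = Br.add (Br.add (Br.mul a w) (Br.neg w)) (Br.mul b w)) (m1 m2 m3 : β) :
    Br.mul (Br.add (Br.add m1 (Br.neg m2)) m3) w =
      Br.add (Br.add (Br.mul m1 w) (Br.neg (Br.mul m2 w))) (Br.mul m3 w) := by
  rw [hw (Br.add m1 (Br.neg m2)) m3, hw m1 (Br.neg m2), neg_mul_w Br w hw m2]
  simp only [Br.add_assoc, neg_add_cancel_left, add_neg_cancel_left]

end st17

/-- `S_w(x,y) = x∘y - x∘w + w`, the first component of `ř_w`. -/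
def st17S {β : Type*} (Br : SkewBrace β) (w x y : β) : β :=
  Br.add (Br.add (Br.mul x y) (Br.neg (Br.mul x w))) w

/-- `τ_w(x,y) = S_w(x,y)⁻ ∘ x ∘ y`, the second component of `ř_w`. -/
def st17T {β : Type*} (Br : SkewBrace β) (w x y : β) : β :=
  Br.mul (Br.mul (Br.inv (st17S Br w x y)) x) y

namespace st17

variable {β : Type*} (Br : SkewBrace β) (w : β)
  (hw : ∀ a b : β, Br.mul (Br.add a b) w
      = Br.add (Br.add (Br.mul a w) (Br.neg w)) (Br.mul b w))

include hw

theorem hSw (x y : β) :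
    Br.mul (st17S Br w x y) w =
      Br.add (Br.add (Br.mul (Br.mul x y) w) (Br.neg (Br.mul (Br.mul x w) w)))
        (Br.mul w w) :=
  distw Br w hw (Br.mul x y) (Br.mul x w) w

omit hw in
theorem hStau (x y : β) :
    Br.mul (st17S Br w x y) (st17T Br w x y) = Br.mul x y := by
  show Br.mul (st17S Br w x y)
      (Br.mul (Br.mul (Br.inv (st17S Br w x y)) x) y) = _
  rw [← Br.mul_assoc, ← Br.mul_assoc, Br.mul_inv, Br.zero_mul]

theorem hSB (x y t : β) :
    Br.mul (st17S Br w x y) (st17S Br w (st17T Br w x y) t) =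
      Br.add (Br.add (Br.mul (Br.mul x y) t) (Br.neg (Br.mul (Br.mul x w) w)))
        (Br.mul w w) := by
  show Br.mul (st17S Br w x y)
      (Br.add (Br.add (Br.mul (st17T Br w x y) t)
        (Br.neg (Br.mul (st17T Br w x y) w))) w) = _
  rw [dist3, ← Br.mul_assoc, ← Br.mul_assoc, hStau, hSw Br w hw]
  simp only [Br.add_assoc, neg_add_cancel_left, add_neg_cancel_left]

omit hw in
theorem hSC (x y t : β) :
    st17S Br w x (st17S Br w y t) =
      Br.add (Br.add (Br.mul x (Br.mul y t)) (Br.neg (Br.mul x (Br.mul y w)))) w := by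
  show Br.add (Br.add (Br.mul x (st17S Br w y t)) (Br.neg (Br.mul x w))) w = _
  rw [show Br.mul x (st17S Br w y t) = _ from dist3 Br x (Br.mul y t) (Br.mul y w) w]
  simp only [Br.add_assoc, neg_add_cancel_left, add_neg_cancel_left]

theorem I1 (x y t : β) :
    st17S Br (w) (st17S Br w x y) (st17S Br w (st17T Br w x y) t) =
      st17S Br w x (st17S Br w y t) := by
  rw [hSC Br w x y t]
  show Br.add (Br.add (Br.mul (st17S Br w x y) (st17S Br w (st17T Br w x y) t))
      (Br.neg (Br.mul (st17S Br w x y) w))) w = _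
  rw [hSB Br w hw, hSw Br w hw]
  simp only [Br.add_assoc, Br.mul_assoc, neg_add_rev, neg_neg,
    neg_add_cancel_left, add_neg_cancel_left]

omit hw in
theorem hrel (x y t : β) :
    Br.add (Br.add
        (Br.mul (Br.inv (st17S Br w x (st17S Br w y t))) (Br.mul x (Br.mul y t)))
        (Br.neg (Br.mul (Br.inv (st17S Br w x (st17S Br w y t)))
          (Br.mul x (Br.mul y w)))))
      (Br.mul (Br.inv (st17S Br w x (st17S Br w y t))) w) = Br.zero := by
  rw [← dist3, ← hSC Br w x y t, Br.inv_mul]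

theorem hrelw (x y t : β) :
    Br.add (Br.add
        (Br.mul (Br.mul (Br.inv (st17S Br w x (st17S Br w y t)))
          (Br.mul x (Br.mul y t))) w)
        (Br.neg (Br.mul (Br.mul (Br.inv (st17S Br w x (st17S Br w y t)))
          (Br.mul x (Br.mul y w))) w)))
      (Br.mul (Br.mul (Br.inv (st17S Br w x (st17S Br w y t))) w) w) = w := by
  have h := congrArg (fun u => Br.mul u w) (hrel Br w x y t)
  rw [distw Br w hw, Br.zero_mul] at h
  exact h

theorem hM3 (x y t : β) :
    Br.mul (Br.mul (Br.inv (st17S Br w x (st17S Br w y t))) w) w =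
      Br.add (Br.add
        (Br.mul (Br.mul (Br.inv (st17S Br w x (st17S Br w y t)))
          (Br.mul x (Br.mul y w))) w)
        (Br.neg (Br.mul (Br.mul (Br.inv (st17S Br w x (st17S Br w y t)))
          (Br.mul x (Br.mul y t))) w))) w := by
  apply add_left_cancel Br
    (a := Br.add (Br.mul (Br.mul (Br.inv (st17S Br w x (st17S Br w y t)))
          (Br.mul x (Br.mul y t))) w)
      (Br.neg (Br.mul (Br.mul (Br.inv (st17S Br w x (st17S Br w y t)))
          (Br.mul x (Br.mul y w))) w)))
  rw [hrelw Br w hw]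
  simp only [Br.add_assoc, neg_add_cancel_left, add_neg_cancel_left]

theorem I2 (x y t : β) :
    Br.mul (Br.mul (Br.inv (st17S Br w x (st17S Br w y t))) (st17S Br w x y))
        (st17S Br w (st17T Br w x y) t) =
      st17S Br w (st17T Br w x (st17S Br w y t)) (st17T Br w y t) := by
  have hth1 : Br.mul (st17T Br w x (st17S Br w y t)) (st17T Br w y t) =
      Br.mul (Br.inv (st17S Br w x (st17S Br w y t))) (Br.mul x (Br.mul y t)) := by
    show Br.mul (Br.mul (Br.mul (Br.inv (st17S Br w x (st17S Br w y t))) x)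
        (st17S Br w y t))
        (Br.mul (Br.mul (Br.inv (st17S Br w y t)) y) t) = _
    simp only [Br.mul_assoc, mul_inv_cancel_left]
  have hPC' : st17T Br w x (st17S Br w y t) =
      Br.add (Br.add
        (Br.mul (Br.mul (Br.inv (st17S Br w x (st17S Br w y t))) x) (Br.mul y t))
        (Br.neg (Br.mul (Br.mul (Br.inv (st17S Br w x (st17S Br w y t))) x)
          (Br.mul y w))))
        (Br.mul (Br.mul (Br.inv (st17S Br w x (st17S Br w y t))) x) w) :=
    dist3 Br (Br.mul (Br.inv (st17S Br w x (st17S Br w y t))) x)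
      (Br.mul y t) (Br.mul y w) w
  conv_rhs => rw [show st17S Br w (st17T Br w x (st17S Br w y t)) (st17T Br w y t) =
    Br.add (Br.add (Br.mul (st17T Br w x (st17S Br w y t)) (st17T Br w y t))
      (Br.neg (Br.mul (st17T Br w x (st17S Br w y t)) w))) w from rfl]
  rw [hth1]
  conv_rhs => rw [hPC', distw Br w hw]
  rw [Br.mul_assoc, hSB Br w hw, dist3, ← Br.mul_assoc (Br.inv (st17S Br w x (st17S Br w y t))) w w,
    hM3 Br w hw]
  simp only [Br.add_assoc, Br.mul_assoc, neg_add_rev, neg_neg,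
    neg_add_cancel_left, add_neg_cancel_left]

omit hw

theorem inv_prod3 (C A B : β) :
    Br.inv (Br.mul (Br.mul (Br.inv C) A) B) =
      Br.mul (Br.inv B) (Br.mul (Br.inv A) C) := by
  rw [inv_mul_rev, inv_mul_rev, inv_inv]

end st17

/-- A map `r(a,b) = (u a b, v a b)` satisfies the YBE provided its components satisfy
the three braid component identities. -/
theorem st17.ybe_of_components {X : Type*} (u v : X → X → X)
    (h1 : ∀ a b c : X, u (u a b) (u (v a b) c) = u a (u b c))
    (h2 : ∀ a b c : X, v (u a b) (u (v a b) c) = u (v a (u b c)) (v b c))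
    (h3 : ∀ a b c : X, v (v a b) c = v (v a (u b c)) (v b c)) :
    IsYBE (fun p : X × X => (u p.1 p.2, v p.1 p.2)) := by
  unfold IsYBE
  funext p
  obtain ⟨a, b, c⟩ := p
  simp only [Function.comp_apply]
  exact Prod.ext (h1 a b c) (Prod.ext (h2 a b c) (h3 a b c))


/-- Given a unital near-truss `T`, a skew brace `B`, unital near-truss homomorphisms
`π : T → T(B)` and `γ : T(B) → T` with `π ∘ γ = id`, and `z ∈ T` with `π z ∈ D_r(B)`,
the map `ř^z(a,b) = (η̌_a^z(b), η̌_a^z(b)⁻¹ a b)` with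
`η̌_a^z(b) = [γπ(a)γπ(b), γπ(a)γπ(z), γπ(z)]` and `η̌_a^z(b)⁻¹ = γ((π(η̌_a^z(b)))⁻¹)`
is a set-theoretic solution of the Yang-Baxter equation on `T`. -/
theorem statement17 {α β : Type*} (T : UnitalNearTruss α) (Br : SkewBrace β)
    (π : α → β) (γ : β → α)
    (hπt : ∀ a b c, π (T.tern a b c) = Br.add (Br.add (π a) (Br.neg (π b))) (π c))
    (hπm : ∀ a b, π (T.mul a b) = Br.mul (π a) (π b))
    (hπ1 : π T.one = Br.zero)
    (hγt : ∀ a b c, γ (Br.add (Br.add a (Br.neg b)) c) = T.tern (γ a) (γ b) (γ c))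
    (hγm : ∀ a b, γ (Br.mul a b) = T.mul (γ a) (γ b))
    (hγ1 : γ Br.zero = T.one)
    (hπγ : ∀ b, π (γ b) = b)
    (z : α) (hz : π z ∈ Br.Dr) :
    IsYBE (fun p : α × α =>
      (T.tern (T.mul (γ (π p.1)) (γ (π p.2))) (T.mul (γ (π p.1)) (γ (π z))) (γ (π z)),
       T.mul (T.mul (γ (Br.inv (π (T.tern (T.mul (γ (π p.1)) (γ (π p.2)))
         (T.mul (γ (π p.1)) (γ (π z))) (γ (π z)))))) p.1) p.2)) := by
  have hw : ∀ a b : β, Br.mul (Br.add a b) (π z) =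
      Br.add (Br.add (Br.mul a (π z)) (Br.neg (π z))) (Br.mul b (π z)) := hz
  have hu' : ∀ p q : β,
      T.tern (T.mul (γ p) (γ q)) (T.mul (γ p) (γ (π z))) (γ (π z)) =
        γ (st17S Br (π z) p q) := by
    intro p q
    conv_rhs => rw [show st17S Br (π z) p q =
      Br.add (Br.add (Br.mul p q) (Br.neg (Br.mul p (π z)))) (π z) from rfl,
      hγt, hγm, hγm]
  have hfoldT : ∀ p q : β,
      Br.mul (Br.mul (Br.inv (st17S Br (π z) p q)) p) q = st17T Br (π z) p q :=
    fun _ _ => rfl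
  have hγmul : ∀ p q : β, T.mul (γ p) (γ q) = γ (Br.mul p q) :=
    fun p q => (hγm p q).symm
  have hγcancel : ∀ (p : β) (s : α), T.mul (γ p) (T.mul (γ (Br.inv p)) s) = s := by
    intro p s
    rw [← T.mul_assoc, ← hγm, Br.mul_inv, hγ1, T.one_mul]
  refine st17.ybe_of_components
    (fun a b => T.tern (T.mul (γ (π a)) (γ (π b)))
      (T.mul (γ (π a)) (γ (π z))) (γ (π z)))
    (fun a b => T.mul (T.mul (γ (Br.inv (π (T.tern (T.mul (γ (π a)) (γ (π b)))
      (T.mul (γ (π a)) (γ (π z))) (γ (π z)))))) a) b) ?_ ?_ ?_ <;>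
    intro a b c
  · -- first component
    simp only [hu', hπγ, hπm, hfoldT]
    exact congrArg γ (st17.I1 Br (π z) hw (π a) (π b) (π c))
  · -- second component
    simp only [hu', hπγ, hπm, hfoldT]
    rw [st17.I1 Br (π z) hw (π a) (π b) (π c), hγmul, hγmul]
    exact congrArg γ (st17.I2 Br (π z) hw (π a) (π b) (π c))
  · -- third component
    simp only [hu', hπγ, hπm, hfoldT]
    rw [← st17.I2 Br (π z) hw (π a) (π b) (π c), st17.inv_prod3 Br, hγm, hγm]
    simp only [T.mul_assoc, hγcancel]
end

section
/- Let T be a unital near-truss, B a skew brace, π : T → T(B) a surjective unital near-truss homomorphism, γ : T(B) → T a unital near-truss homomorphism with π∘γ = id, i : ker_1(π) → T the inclusion of the fiber over the identity. Then the map φ : ker_1(π) × T(B) → T, (s,b) ↦ [i(s), 1_T, γ(b)], is a bijection. -/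
/-- Given a unital near-truss `T`, a skew brace `B`, a surjective unital near-truss
homomorphism `π : T → T(B)` and a unital near-truss homomorphism `γ : T(B) → T` with
`π ∘ γ = id`, the map `φ : ker_1(π) × T(B) → T`, `(s,b) ↦ [i(s), 1_T, γ(b)]`, is a
bijection. -/
theorem statement19 {α β : Type*} (T : UnitalNearTruss α) (Br : SkewBrace β)
    (π : α → β) (γ : β → α)
    (hπt : ∀ a b c, π (T.tern a b c) = Br.add (Br.add (π a) (Br.neg (π b))) (π c))
    (hπm : ∀ a b, π (T.mul a b) = Br.mul (π a) (π b))
    (hπ1 : π T.one = Br.zero)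
    (hπs : Function.Surjective π)
    (hγt : ∀ a b c, γ (Br.add (Br.add a (Br.neg b)) c) = T.tern (γ a) (γ b) (γ c))
    (hγm : ∀ a b, γ (Br.mul a b) = T.mul (γ a) (γ b))
    (hγ1 : γ Br.zero = T.one)
    (hπγ : ∀ b, π (γ b) = b) :
    Function.Bijective (fun p : {t : α // π t = Br.zero} × β =>
      T.tern p.1.1 T.one (γ p.2)) := by
  constructor
  · rintro ⟨⟨s, hs⟩, b⟩ ⟨⟨s', hs'⟩, b'⟩ h
    simp only at h
    have hb : b = b' := by
      have := congrArg π h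
      rw [hπt, hπt, hs, hs', hπ1, hπγ, hπγ] at this
      simp only [Br.add_zero, Br.zero_add] at this
      have := congrArg (Br.add Br.zero) this
      rwa [← Br.add_assoc, ← Br.add_assoc, Br.add_neg, Br.zero_add, Br.zero_add] at this
    subst hb
    have hss : s = s' := by
      have h1 := congrArg (fun x => T.tern x (γ b) T.one) h
      rw [← T.tern_assoc, ← T.tern_assoc, T.tern_idl] at h1
      simpa [T.tern_idr] using h1
    simp [hss]
  · intro t
    refine ⟨⟨⟨T.tern t (γ (π t)) T.one, ?_⟩, π t⟩, ?_⟩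
    · rw [hπt, hπγ, hπ1, Br.add_neg, Br.zero_add]
    · simp only
      rw [← T.tern_assoc, T.tern_idl, T.tern_idr]
end
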